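/- (Weil) Let F be a number field, W a projective algebraic variety over F, D a very ample divisor on W, and let γ = {s_0, …, s_m} and γ' = {s_0', …, s_m'} be two bases over F of the space of global sections Γ(W, O(D)). Then there exist two positive constants c_1, c_2 such that c_1 ≤ H(W, D, γ, x) / H(W, D, γ', x) ≤ c_2 for all x ∈ W(F). -/

import Mathlib

/-!
Weil's theorem on comparison of heights attached to two bases of the space of global
sections of a very ample divisor.

Formalization conventions:

* `F` is a number field.  The absolute height of a coordinate vector
  `x = (x₀, …, x_m) ∈ F^{m+1}` is `H(x) = ∏_{v ∈ Val(F)} max_i |x_i|_v`.  The product over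
  the archimedean places is `∏_w (max_i w (x_i))^{mult w}` and the product over the
  nonarchimedean places equals the inverse of the absolute norm of the fractional ideal
  generated by the coordinates.  This is the definition `heightVec` below.
* Since `D` is very ample, the basis `γ = {s₀, …, s_m}` of `Γ(W, O(D))` embeds `W` into
  `ℙ^m` in such a way that the sections `s_i` become the homogeneous coordinates; the
  variety `W` is thus modelled by an arbitrary set `W` of points of `ℙ^m(F)`
  (`Projectivization F (Fin (m+1) → F)`), and the height `H(W, D, γ, x)` is the height of
  a coordinate vector representing `x`.
* A second basis `γ' = {s₀', …, s_m'}` of the same space of sections is obtained from `γ`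
  by an invertible base-change matrix `A` over `F`; the corresponding height of `x` is the
  height of the coordinate vector `A.mulVec x.rep`.
-/

open MvPolynomial NumberField
open scoped nonZeroDivisors

/-- The absolute multiplicative height `∏_{v ∈ Val(F)} max_i |x_i|_v` of a coordinate
vector over a number field `F`: the archimedean part is the product over the infinite
places (with their multiplicities), and the nonarchimedean part is the inverse of the
absolute norm of the fractional ideal generated by the coordinates. -/
noncomputable def heightVec (F : Type*) [Field F] [NumberField F] {ι : Type*} [Fintype ι]
    (x : ι → F) : ℝ :=
  (∏ w : InfinitePlace F, (⨆ i, w (x i)) ^ w.mult) *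
    ((FractionalIdeal.absNorm (∑ i, FractionalIdeal.spanSingleton (𝓞 F)⁰ (x i)) : ℚ) : ℝ)⁻¹

/-!
A linear change of coordinates `x ↦ A x` distorts every local factor `max_i |x_i|_v` by a
bounded amount. At an infinite place `v` the triangle inequality gives
`max_i |(A x)_i|_v ≤ (∑_{i,j} |A_{ij}|_v) · max_j |x_j|_v`. The finite places are handled
all at once: the fractional ideal generated by the coordinates of `A x` lies in the product
of the ideal generated by the entries of `A` and the one generated by the coordinates of `x`,
and the absolute norm is antitone on nonzero fractional ideals. Hence `H(A x) ≤ C_A · H(x)`,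
and applying this to `A` and `A⁻¹` gives both bounds.
-/

open Matrix

namespace FractionalIdeal

section Sum

variable {R : Type*} [CommRing R] {S : Submonoid R} {P : Type*} [CommRing P] [Algebra R P]
  {ι : Type*} {s : Finset ι} {J : FractionalIdeal S P}

theorem sum_le_iff {f : ι → FractionalIdeal S P} :
    ∑ i ∈ s, f i ≤ J ↔ ∀ i ∈ s, f i ≤ J := by
  induction s using Finset.cons_induction with
  | empty => simp
  | cons a s _ ih => simp [Finset.sum_cons, ← sup_eq_add, ih]

theorem sum_spanSingleton_le_iff [IsLocalization S P] {x : ι → P} :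
    ∑ i ∈ s, spanSingleton S (x i) ≤ J ↔ ∀ i ∈ s, x i ∈ J := by
  simp only [sum_le_iff, spanSingleton_le_iff_mem]

end Sum

variable {R : Type*} [CommRing R] [IsDedekindDomain R] [Module.Free ℤ R] [Module.Finite ℤ R]
  {K : Type*} [Field K] [Algebra R K] [IsFractionRing R K]

theorem absNorm_pos {I : FractionalIdeal R⁰ K} (hI : I ≠ 0) : 0 < absNorm I :=
  (absNorm_nonneg I).lt_of_ne' (absNorm_eq_zero_iff.not.mpr hI)

theorem absNorm_le_absNorm_of_le {I J : FractionalIdeal R⁰ K} (hI : I ≠ 0) (h : I ≤ J) :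
    absNorm J ≤ absNorm I := by
  have hJ : J ≠ 0 := ne_bot_of_le_ne_bot hI h
  obtain ⟨N, hN⟩ : ∃ N : Ideal R, (N : FractionalIdeal R⁰ K) = I * J⁻¹ :=
    le_one_iff_exists_coeIdeal.mp <| (show I * J⁻¹ ≤ J * J⁻¹ by gcongr).trans_eq
      (mul_inv_cancel₀ hJ)
  have hI_eq : I = N * J := by rw [hN, mul_assoc, inv_mul_cancel₀ hJ, mul_one]
  have hN : Ideal.absNorm N ≠ 0 := by
    rw [Ne, Ideal.absNorm_eq_zero_iff]
    rintro rfl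
    simp [hI_eq] at hI
  rw [hI_eq, map_mul, coeIdeal_absNorm]
  exact le_mul_of_one_le_left (absNorm_nonneg J) (mod_cast Nat.one_le_iff_ne_zero.mpr hN)

end FractionalIdeal

theorem AbsoluteValue.iSup_mulVec_le {R : Type*} [Semiring R] {ι κ : Type*} [Fintype ι]
    [Fintype κ] (v : AbsoluteValue R ℝ) (A : Matrix ι κ R) (x : κ → R) :
    ⨆ i, v ((A *ᵥ x) i) ≤ (∑ p, v (Function.uncurry A p)) * ⨆ j, v (x j) := by
  have hS : 0 ≤ ⨆ j, v (x j) := Real.iSup_nonneg fun j => v.nonneg _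
  refine Real.iSup_le (fun i => ?_) (mul_nonneg (Finset.sum_nonneg fun p _ => v.nonneg _) hS)
  calc v ((A *ᵥ x) i) ≤ ∑ j, v (A i j) * v (x j) :=
        (v.sum_le _ _).trans_eq (by simp [map_mul])
    _ ≤ ∑ j, v (A i j) * ⨆ j, v (x j) := by
      gcongr with j
      exact le_ciSup (f := fun j => v (x j)) (Set.finite_range _).bddAbove j
    _ = (∑ j, v (A i j)) * ⨆ j, v (x j) := by rw [Finset.sum_mul]
    _ ≤ (∑ p, v (Function.uncurry A p)) * ⨆ j, v (x j) := by
      rw [Fintype.sum_prod_type]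
      gcongr
      exact Finset.single_le_sum (fun i _ => Finset.sum_nonneg fun j _ => v.nonneg _)
        (Finset.mem_univ i)

section Height

variable {F : Type*} [Field F] [NumberField F]

noncomputable def archimedeanHeight {ι : Type*} (x : ι → F) : ℝ :=
  ∏ w : InfinitePlace F, (⨆ i, w (x i)) ^ w.mult

theorem archimedeanHeight_nonneg {ι : Type*} (x : ι → F) : 0 ≤ archimedeanHeight x :=
  Finset.prod_nonneg fun w _ => pow_nonneg (Real.iSup_nonneg fun _ => apply_nonneg w _) _

variable {ι κ : Type*} [Fintype ι] [Fintype κ]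

noncomputable def archimedeanDistortion (A : Matrix ι κ F) : ℝ :=
  ∏ w : InfinitePlace F, (∑ p, w (Function.uncurry A p)) ^ w.mult

theorem archimedeanDistortion_nonneg (A : Matrix ι κ F) : 0 ≤ archimedeanDistortion A :=
  Finset.prod_nonneg fun w _ => pow_nonneg (Finset.sum_nonneg fun _ _ => apply_nonneg w _) _

noncomputable def coordinateIdeal (x : ι → F) : FractionalIdeal (𝓞 F)⁰ F :=
  ∑ i, FractionalIdeal.spanSingleton _ (x i)

theorem heightVec_eq (x : ι → F) :
    heightVec F x = archimedeanHeight x * ((coordinateIdeal x).absNorm : ℝ)⁻¹ := rfl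

theorem mem_coordinateIdeal (x : ι → F) (j : ι) : x j ∈ coordinateIdeal x :=
  FractionalIdeal.sum_spanSingleton_le_iff.mp le_rfl j (Finset.mem_univ j)

theorem coordinateIdeal_ne_zero {x : ι → F} (hx : x ≠ 0) : coordinateIdeal x ≠ 0 := by
  contrapose! hx
  ext j
  simpa [hx, FractionalIdeal.mem_zero_iff] using mem_coordinateIdeal x j

theorem coordinateIdeal_mulVec_le (A : Matrix ι κ F) (x : κ → F) :
    coordinateIdeal (A *ᵥ x) ≤ coordinateIdeal (Function.uncurry A) * coordinateIdeal x :=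
  FractionalIdeal.sum_spanSingleton_le_iff.mpr fun i _ => FractionalIdeal.mem_coe.mp <|
    Submodule.sum_mem _ fun j _ => FractionalIdeal.mem_coe.mpr <|
      FractionalIdeal.mul_mem_mul (mem_coordinateIdeal _ (i, j)) (mem_coordinateIdeal x j)

theorem archimedeanHeight_pos {x : ι → F} (hx : x ≠ 0) : 0 < archimedeanHeight x := by
  obtain ⟨i, hi⟩ := Function.ne_iff.mp hx
  exact Finset.prod_pos fun w _ => pow_pos
    ((w.pos_iff.mpr hi).trans_le
      (le_ciSup (f := fun i => w (x i)) (Set.finite_range _).bddAbove i)) _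

theorem archimedeanHeight_mulVec_le (A : Matrix ι κ F) (x : κ → F) :
    archimedeanHeight (A *ᵥ x) ≤ archimedeanDistortion A * archimedeanHeight x := by
  rw [archimedeanHeight, archimedeanHeight, archimedeanDistortion, ← Finset.prod_mul_distrib]
  have hS (w : InfinitePlace F) : 0 ≤ ⨆ i, w ((A *ᵥ x) i) :=
    Real.iSup_nonneg fun _ => apply_nonneg w _
  refine Finset.prod_le_prod (fun w _ => pow_nonneg (hS w) _) fun w _ => ?_
  rw [← mul_pow]
  exact pow_le_pow_left₀ (hS w) (w.1.iSup_mulVec_le A x) _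

theorem inv_absNorm_coordinateIdeal_mulVec_le (A : Matrix ι κ F) {x : κ → F}
    (hAx : A *ᵥ x ≠ 0) :
    ((coordinateIdeal (A *ᵥ x)).absNorm : ℝ)⁻¹ ≤
      ((coordinateIdeal (Function.uncurry A)).absNorm : ℝ)⁻¹ *
        ((coordinateIdeal x).absNorm : ℝ)⁻¹ := by
  have hle := coordinateIdeal_mulVec_le A x
  have hprod := ne_bot_of_le_ne_bot (coordinateIdeal_ne_zero hAx) hle
  rw [← mul_inv, ← Rat.cast_mul, ← map_mul]
  exact inv_anti₀ (mod_cast FractionalIdeal.absNorm_pos hprod)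
    (mod_cast FractionalIdeal.absNorm_le_absNorm_of_le (coordinateIdeal_ne_zero hAx) hle)

theorem heightVec_pos {x : ι → F} (hx : x ≠ 0) : 0 < heightVec F x :=
  mul_pos (archimedeanHeight_pos hx)
    (inv_pos.mpr (mod_cast FractionalIdeal.absNorm_pos (coordinateIdeal_ne_zero hx)))

theorem exists_heightVec_mulVec_le (A : Matrix ι κ F) :
    ∃ C > 0, ∀ x, A *ᵥ x ≠ 0 → heightVec F (A *ᵥ x) ≤ C * heightVec F x := by
  set C := archimedeanDistortion A * ((coordinateIdeal (Function.uncurry A)).absNorm : ℝ)⁻¹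
  refine ⟨max C 1, by positivity, fun x hAx => ?_⟩
  have hx : x ≠ 0 := by rintro rfl; simp at hAx
  calc heightVec F (A *ᵥ x)
      ≤ (archimedeanDistortion A * archimedeanHeight x) *
          (((coordinateIdeal (Function.uncurry A)).absNorm : ℝ)⁻¹ *
            ((coordinateIdeal x).absNorm : ℝ)⁻¹) := by
        rw [heightVec_eq]
        exact mul_le_mul (archimedeanHeight_mulVec_le A x)
          (inv_absNorm_coordinateIdeal_mulVec_le A hAx)
          (inv_nonneg.mpr (mod_cast FractionalIdeal.absNorm_nonneg _))
          (mul_nonneg (archimedeanDistortion_nonneg A) (archimedeanHeight_nonneg x))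
    _ = C * heightVec F x := by rw [heightVec_eq]; ring
    _ ≤ max C 1 * heightVec F x := by gcongr; exacts [(heightVec_pos hx).le, le_max_left C 1]

end Height

/-- **Weil's theorem.** If `γ` and `γ'` are two bases of the space of global sections of a
very ample divisor `D` on a projective variety `W` over a number field `F` (so `γ'` is
obtained from `γ` by an invertible matrix `A` over `F`), then the two associated height
functions agree up to two positive multiplicative constants on `W(F)`. -/
theorem weil_height_comparison (F : Type) [Field F] [NumberField F] (m : ℕ)
    (W : Set (Projectivization F (Fin (m + 1) → F)))
    (A : Matrix (Fin (m + 1)) (Fin (m + 1)) F) (hA : IsUnit A.det) :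
    ∃ c₁ c₂ : ℝ, 0 < c₁ ∧ 0 < c₂ ∧ ∀ x ∈ W,
      c₁ ≤ heightVec F x.rep / heightVec F (A.mulVec x.rep) ∧
      heightVec F x.rep / heightVec F (A.mulVec x.rep) ≤ c₂ := by
  obtain ⟨C, hC, hA_le⟩ := exists_heightVec_mulVec_le (F := F) A
  obtain ⟨C', hC', hA_inv_le⟩ := exists_heightVec_mulVec_le A⁻¹
  refine ⟨C⁻¹, C', inv_pos.mpr hC, hC', fun x _ => ?_⟩
  have hx := x.rep_nonzero
  have hinv : A⁻¹ *ᵥ (A *ᵥ x.rep) = x.rep := by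
    rw [mulVec_mulVec, nonsing_inv_mul A hA, one_mulVec]
  have hAx : A *ᵥ x.rep ≠ 0 := fun h => hx (by rw [← hinv, h, mulVec_zero])
  have hpos := heightVec_pos hAx
  constructor
  · rw [le_div_iff₀ hpos, inv_mul_le_iff₀ hC]
    exact hA_le _ hAx
  · rw [div_le_iff₀ hpos]
    have h := hA_inv_le (A *ᵥ x.rep) (by rwa [hinv])
    rwa [hinv] at h
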